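/- arXiv:1607.06484 — 2 statements merged into one kernel-verified Lean document; each statement's English description precedes it below -/
import Mathlib

section
/- Local Laplacian identity at a white point (from the proof of Proposition 3.3): Let δ > 0, w ∈ ℂ, F : ℂ → ℂ and H : ℂ → ℝ. Assume: (i) F is s-holomorphic at the white point w; (ii) there is a neighbourhood of 0 in ℝ such that for all t in it the vertical derivative Ḣ(w + it) exists and equals (2/δ)·F^↑(w + it)·F^↓(w + it); (iii) H(w − δ) − H(w) = |F^↑(w − δ/2)|² − |F^↓(w − δ/2)|² and H(w + δ) − H(w) = |F^↓(w + δ/2)|² − |F^↑(w + δ/2)|². Then the second vertical derivative Ḧ(w) exists and Ḧ(w) + (1/δ²)·(H(w + δ) + H(w − δ) − 2·H(w)) = −(1/δ²)·|F(w + δ/2) − F(w − δ/2)|². -/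
noncomputable section

/-- Projection of `a` onto the line `e^{-iπ/4}·ℝ`. -/
def projUp (a : ℂ) : ℂ := (a - Complex.I * (starRingEnd ℂ) a) / 2

/-- Projection of `a` onto the line `e^{iπ/4}·ℝ`. -/
def projDn (a : ℂ) : ℂ := (a + Complex.I * (starRingEnd ℂ) a) / 2

/-- `F^↑(z)`, the projection of `F z` onto `e^{-iπ/4}·ℝ`. -/
def Fup (F : ℂ → ℂ) (z : ℂ) : ℂ := projUp (F z)

/-- `F^↓(z)`, the projection of `F z` onto `e^{iπ/4}·ℝ`. -/
def Fdn (F : ℂ → ℂ) (z : ℂ) : ℂ := projDn (F z)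

/-- Vertical derivative: `G` has derivative `d` at `z` in the vertical direction,
i.e. the map `t ↦ G (z + i t)` (for real `t`) has derivative `d` at `t = 0`. -/
def HasVDerivAt {E : Type*} [NormedAddCommGroup E] [NormedSpace ℝ E]
    (G : ℂ → E) (d : E) (z : ℂ) : Prop :=
  HasDerivAt (fun t : ℝ => G (z + (t : ℂ) * Complex.I)) d 0

/-- Second vertical derivative: there is a function `G'` which is a vertical derivative of `G`
at all points `z + i t` for `t` near `0`, and `G'` has vertical derivative `d` at `z`. -/
def HasVDeriv2At {E : Type*} [NormedAddCommGroup E] [NormedSpace ℝ E]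
    (G : ℂ → E) (d : E) (z : ℂ) : Prop :=
  ∃ G' : ℂ → E,
    (∀ᶠ t in nhds (0 : ℝ), HasVDerivAt G (G' (z + (t : ℂ) * Complex.I)) (z + (t : ℂ) * Complex.I))
    ∧ HasVDerivAt G' d z

/-- `F` is s-holomorphic at a white point `w`. -/
def SHolWhite (δ : ℝ) (F : ℂ → ℂ) (w : ℂ) : Prop :=
  Fup F w = Fup F (w - (δ / 2 : ℝ)) ∧ Fdn F w = Fdn F (w + (δ / 2 : ℝ)) ∧
  HasVDerivAt (Fup F) (Complex.I / δ * (Fdn F (w + (δ / 2 : ℝ)) - Fdn F (w - (δ / 2 : ℝ)))) w ∧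
  HasVDerivAt (Fdn F) (Complex.I / δ * (Fup F (w + (δ / 2 : ℝ)) - Fup F (w - (δ / 2 : ℝ)))) w

/-- `F` is s-holomorphic at a black point `u`. -/
def SHolBlack (δ : ℝ) (F : ℂ → ℂ) (u : ℂ) : Prop :=
  Fup F u = Fup F (u + (δ / 2 : ℝ)) ∧ Fdn F u = Fdn F (u - (δ / 2 : ℝ)) ∧
  HasVDerivAt (Fup F) (Complex.I / δ * (Fdn F (u + (δ / 2 : ℝ)) - Fdn F (u - (δ / 2 : ℝ)))) u ∧
  HasVDerivAt (Fdn F) (Complex.I / δ * (Fup F (u + (δ / 2 : ℝ)) - Fup F (u - (δ / 2 : ℝ)))) u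

/-- Black points `Ω^•` of the rectangular discrete domain `Ω_δ`:
points `δ k + i t` with `m ≤ k ≤ n` and `t ∈ [c, d]`. -/
def BlackPts (δ : ℝ) (m n : ℤ) (c d : ℝ) : Set ℂ :=
  {z | (∃ k : ℤ, m ≤ k ∧ k ≤ n ∧ z.re = δ * k) ∧ c ≤ z.im ∧ z.im ≤ d}

/-- White points `Ω^∘` of the rectangular discrete domain `Ω_δ`:
points `δ (k + 1/2) + i t` with `m ≤ k ≤ n - 1` and `t ∈ [c, d]`. -/
def WhitePts (δ : ℝ) (m n : ℤ) (c d : ℝ) : Set ℂ :=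
  {z | (∃ k : ℤ, m ≤ k ∧ k ≤ n - 1 ∧ z.re = δ * (k + 1 / 2)) ∧ c ≤ z.im ∧ z.im ≤ d}

/-- Interior black points: `m < k < n` and `c < t < d`. -/
def IntBlackPts (δ : ℝ) (m n : ℤ) (c d : ℝ) : Set ℂ :=
  {z | (∃ k : ℤ, m < k ∧ k < n ∧ z.re = δ * k) ∧ c < z.im ∧ z.im < d}

/-- Interior white points: `m ≤ k ≤ n - 1` and `c < t < d`. -/
def IntWhitePts (δ : ℝ) (m n : ℤ) (c d : ℝ) : Set ℂ :=
  {z | (∃ k : ℤ, m ≤ k ∧ k ≤ n - 1 ∧ z.re = δ * (k + 1 / 2)) ∧ c < z.im ∧ z.im < d}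


/-!
Write `F^↑ = α (1 - i)` and `F^↓ = β (1 + i)` with `α, β` real, so that `Ḣ = (4/δ) α β` near `w`.
The product rule, with s-holomorphicity replacing the values and vertical derivatives of
`F^↑, F^↓` at `w` by values at `w ± δ/2`, gives `Ḧ(w) = -(4/δ²)(α² + β² - α α' - β β')`, where
`α, β'` are taken at `w - δ/2` and `α', β` at `w + δ/2`. Adding the second difference
`(2/δ²)(α² + β² - α'² - β'²)` leaves `-(2/δ²)((α' - α)² + (β - β')²)`, which is
`-|F(w + δ/2) - F(w - δ/2)|² / δ²` because `1 - i ⊥ 1 + i`.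
-/

open Complex

lemma projUp_add_projDn (a : ℂ) : projUp a + projDn a = a := by
  simp only [projUp, projDn]; ring

lemma projUp_eq_ofReal_mul_one_sub_I (a : ℂ) : projUp a = ((a.re - a.im) / 2 : ℝ) * (1 - I) := by
  conv_lhs => rw [← re_add_im a]
  simp only [projUp, map_add, map_mul, conj_ofReal, conj_I]
  push_cast
  linear_combination (a.im / 2 : ℂ) * I_sq

lemma projDn_eq_ofReal_mul_one_add_I (a : ℂ) : projDn a = ((a.re + a.im) / 2 : ℝ) * (1 + I) := by
  conv_lhs => rw [← re_add_im a]
  simp only [projDn, map_add, map_mul, conj_ofReal, conj_I]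
  push_cast
  linear_combination (-a.im / 2 : ℂ) * I_sq

lemma norm_ofReal_mul_one_sub_I_add_sq (α β : ℝ) :
    ‖(α : ℂ) * (1 - I) + β * (1 + I)‖ ^ 2 = 2 * (α ^ 2 + β ^ 2) := by
  rw [show (α : ℂ) * (1 - I) + β * (1 + I) = ((α + β : ℝ) : ℂ) + ((β - α : ℝ) : ℂ) * I by
    push_cast; ring, Complex.sq_norm, normSq_add_mul_I]
  ring

lemma norm_ofReal_mul_one_sub_I_sq (α : ℝ) : ‖(α : ℂ) * (1 - I)‖ ^ 2 = 2 * α ^ 2 := by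
  simpa using norm_ofReal_mul_one_sub_I_add_sq α 0

lemma norm_ofReal_mul_one_add_I_sq (β : ℝ) : ‖(β : ℂ) * (1 + I)‖ ^ 2 = 2 * β ^ 2 := by
  simpa using norm_ofReal_mul_one_sub_I_add_sq 0 β

/-- The algebraic core of the identity, for `x = F(w - δ/2)` and `y = F(w + δ/2)`. -/
lemma re_vderiv_add_second_diff_eq (δ : ℝ) (x y : ℂ) :
    (2 / δ * (I / δ * (projDn y - projDn x)) * projDn y
        + 2 / δ * projUp x * (I / δ * (projUp y - projUp x))).re
      + 1 / δ ^ 2 * ((‖projDn y‖ ^ 2 - ‖projUp y‖ ^ 2) + (‖projUp x‖ ^ 2 - ‖projDn x‖ ^ 2))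
      = -(1 / δ ^ 2 * ‖y - x‖ ^ 2) := by
  conv_rhs => rw [← projUp_add_projDn y, ← projUp_add_projDn x]
  simp only [projUp_eq_ofReal_mul_one_sub_I, projDn_eq_ofReal_mul_one_add_I]
  generalize (x.re - x.im) / 2 = α, (y.re - y.im) / 2 = α', (y.re + y.im) / 2 = β,
    (x.re + x.im) / 2 = β'
  have hdiff : α' * (1 - I) + β * (1 + I) - (α * (1 - I) + β' * (1 + I))
      = ((α' - α : ℝ) : ℂ) * (1 - I) + ((β - β' : ℝ) : ℂ) * (1 + I) := by
    push_cast; ring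
  have hD : 2 / (δ : ℂ) * (I / δ * (β * (1 + I) - β' * (1 + I))) * (β * (1 + I))
        + 2 / δ * (α * (1 - I)) * (I / δ * (α' * (1 - I) - α * (1 - I)))
      = ((-4 / δ ^ 2 * (α ^ 2 + β ^ 2 - α * α' - β * β') : ℝ) : ℂ) := by
    push_cast
    linear_combination 2 / (δ : ℂ) ^ 2 * ((β - β') * β * (I + 2) + α * (α' - α) * (I - 2)) * I_sq
  rw [hD, ofReal_re, hdiff]
  simp only [norm_ofReal_mul_one_sub_I_sq, norm_ofReal_mul_one_add_I_sq,
    norm_ofReal_mul_one_sub_I_add_sq]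
  ring

section VerticalDerivative

variable {z : ℂ}

theorem HasVDerivAt.mul {G₁ G₂ : ℂ → ℂ} {d₁ d₂ : ℂ} (h₁ : HasVDerivAt G₁ d₁ z)
    (h₂ : HasVDerivAt G₂ d₂ z) : HasVDerivAt (fun z => G₁ z * G₂ z) (d₁ * G₂ z + G₁ z * d₂) z := by
  have h := HasDerivAt.mul h₁ h₂
  rwa [ofReal_zero, zero_mul, add_zero] at h

theorem HasVDerivAt.const_mul (c : ℂ) {G : ℂ → ℂ} {d : ℂ} (h : HasVDerivAt G d z) :
    HasVDerivAt (fun z => c * G z) (c * d) z :=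
  HasDerivAt.const_mul c h

theorem HasVDerivAt.re {G : ℂ → ℂ} {d : ℂ} (h : HasVDerivAt G d z) :
    HasVDerivAt (fun z => (G z).re) d.re z :=
  reCLM.hasFDerivAt.comp_hasDerivAt 0 h

end VerticalDerivative

theorem SHolWhite.hasVDerivAt_mul {δ : ℝ} {F : ℂ → ℂ} {w : ℂ} (hF : SHolWhite δ F w) :
    HasVDerivAt (fun z => 2 / δ * Fup F z * Fdn F z)
      (2 / δ * (I / δ * (projDn (F (w + (δ / 2 : ℝ))) - projDn (F (w - (δ / 2 : ℝ)))))
          * projDn (F (w + (δ / 2 : ℝ)))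
        + 2 / δ * projUp (F (w - (δ / 2 : ℝ)))
          * (I / δ * (projUp (F (w + (δ / 2 : ℝ))) - projUp (F (w - (δ / 2 : ℝ)))))) w := by
  obtain ⟨hup_eq, hdn_eq, hup, hdn⟩ := hF
  have := (hup.const_mul (2 / δ : ℂ)).mul hdn
  rwa [hup_eq, hdn_eq] at this

theorem local_laplacian_white_general
    (δ : ℝ) (w : ℂ) (F : ℂ → ℂ) (H : ℂ → ℝ)
    (hsh : SHolWhite δ F w)
    (hH' : ∀ᶠ t in nhds (0 : ℝ), ∃ r : ℝ,
      HasVDerivAt H r (w + (t : ℂ) * Complex.I) ∧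
      (r : ℂ) = 2 / δ * Fup F (w + (t : ℂ) * Complex.I) * Fdn F (w + (t : ℂ) * Complex.I))
    (hleft : H (w - (δ : ℝ)) - H w
      = ‖Fup F (w - (δ / 2 : ℝ))‖ ^ 2 - ‖Fdn F (w - (δ / 2 : ℝ))‖ ^ 2)
    (hright : H (w + (δ : ℝ)) - H w
      = ‖Fdn F (w + (δ / 2 : ℝ))‖ ^ 2 - ‖Fup F (w + (δ / 2 : ℝ))‖ ^ 2) :
    ∃ h2 : ℝ, HasVDeriv2At H h2 w ∧
      h2 + 1 / δ ^ 2 * (H (w + (δ : ℝ)) + H (w - (δ : ℝ)) - 2 * H w)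
        = -(1 / δ ^ 2 * ‖F (w + (δ / 2 : ℝ)) - F (w - (δ / 2 : ℝ))‖ ^ 2) := by
  refine ⟨_, ⟨fun z => (2 / δ * Fup F z * Fdn F z).re, ?_, hsh.hasVDerivAt_mul.re⟩, ?_⟩
  · filter_upwards [hH'] with t ⟨r, hr, hr_eq⟩
    simpa only [← hr_eq, ofReal_re] using hr
  · have hsecond_diff : H (w + (δ : ℝ)) + H (w - (δ : ℝ)) - 2 * H w
        = (‖Fdn F (w + (δ / 2 : ℝ))‖ ^ 2 - ‖Fup F (w + (δ / 2 : ℝ))‖ ^ 2)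
          + (‖Fup F (w - (δ / 2 : ℝ))‖ ^ 2 - ‖Fdn F (w - (δ / 2 : ℝ))‖ ^ 2) := by
      linarith
    rw [hsecond_diff]
    exact re_vderiv_add_second_diff_eq δ _ _

/-- Local Laplacian identity at a white point (from the proof of Proposition 3.3). -/
theorem local_laplacian_white
    (δ : ℝ) (hδ : 0 < δ) (w : ℂ) (F : ℂ → ℂ) (H : ℂ → ℝ)
    (hsh : SHolWhite δ F w)
    (hH' : ∀ᶠ t in nhds (0 : ℝ), ∃ r : ℝ,
      HasVDerivAt H r (w + (t : ℂ) * Complex.I) ∧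
      (r : ℂ) = 2 / δ * Fup F (w + (t : ℂ) * Complex.I) * Fdn F (w + (t : ℂ) * Complex.I))
    (hleft : H (w - (δ : ℝ)) - H w
      = ‖Fup F (w - (δ / 2 : ℝ))‖ ^ 2 - ‖Fdn F (w - (δ / 2 : ℝ))‖ ^ 2)
    (hright : H (w + (δ : ℝ)) - H w
      = ‖Fdn F (w + (δ / 2 : ℝ))‖ ^ 2 - ‖Fup F (w + (δ / 2 : ℝ))‖ ^ 2) :
    ∃ h2 : ℝ, HasVDeriv2At H h2 w ∧
      h2 + 1 / δ ^ 2 * (H (w + (δ : ℝ)) + H (w - (δ : ℝ)) - 2 * H w)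
        = -(1 / δ ^ 2 * ‖F (w + (δ / 2 : ℝ)) - F (w - (δ / 2 : ℝ))‖ ^ 2) :=
  local_laplacian_white_general δ w F H hsh hH' hleft hright
end
end

section
/- Contour identity for s-holomorphic functions (well-definedness step in the proof of Proposition 3.3): Let δ > 0, b ∈ ℂ, set c = b + δ/2, and let t₁ < t₂ be reals. Let F : ℂ → ℂ be such that for every t ∈ [t₁, t₂], F is s-holomorphic at the white point b + it, and such that t ↦ F(b + it) and t ↦ F(c + it) are continuous on [t₁, t₂]. Then ∫_{t₁}^{t₂} [ (2/δ)·F^↑(c + it)·F^↓(c + it) − (2/δ)·F^↑(b + it)·F^↓(b + it) ] dt = |F^↓(b + it₂)|² − |F^↓(b + it₁)|². -/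
/-!
Write `g(t) = F^↓(b + it)`. At a white point `w`, the vertical derivative of `F^↓` is
`(i/δ)(F^↑(w + δ/2) − F^↑(w − δ/2))`, which lies on the same line `e^{iπ/4}ℝ` as `F^↓(w)`; for two
numbers `x, y` on that line `conj x · y = −i x y` is real. Hence
`d/dt |g|² = 2 Re(conj g · g') = (2/δ) F^↓(w) (F^↑(w + δ/2) − F^↑(w − δ/2))`, and the
s-holomorphicity relations `F^↑(w − δ/2) = F^↑(w)`, `F^↓(w) = F^↓(w + δ/2)` turn this into the
integrand. The identity is then the fundamental theorem of calculus; the integrand is continuous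
because on the line through `b` both projections of `F` are differentiable.
-/

noncomputable section

open Complex ComplexConjugate

lemma conj_projUp (a : ℂ) : conj (projUp a) = I * projUp a := by
  simp only [projUp, map_div₀, map_sub, map_mul, conj_I, conj_conj, map_ofNat]
  linear_combination (conj a / 2) * I_sq

lemma conj_projDn (a : ℂ) : conj (projDn a) = -I * projDn a := by
  simp only [projDn, map_div₀, map_add, map_mul, conj_I, conj_conj, map_ofNat]
  linear_combination (conj a / 2) * I_sq

lemma continuous_projUp : Continuous projUp := by
  unfold projUp
  fun_prop

lemma continuous_projDn : Continuous projDn := by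
  unfold projDn
  fun_prop

/-- Both factors lie on the line `e^{iπ/4}ℝ`, so `conj x * y` is real. -/
lemma ofReal_re_conj_mul_of_conj_eq_neg_I_mul {x y : ℂ} (hx : conj x = -I * x)
    (hy : conj y = -I * y) : (((conj x * y).re : ℝ) : ℂ) = -I * x * y := by
  rw [re_eq_add_conj, map_mul, conj_conj, hx, hy]
  ring

lemma HasVDerivAt.hasDerivAt_vertical {E : Type*} [NormedAddCommGroup E] [NormedSpace ℝ E]
    {G : ℂ → E} {d : E} {b : ℂ} {t : ℝ} (h : HasVDerivAt G d (b + t * I)) :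
    HasDerivAt (fun s : ℝ => G (b + s * I)) d t := by
  have h' : HasDerivAt (fun u : ℝ => G (b + t * I + u * I)) d (t - t) := by
    rwa [sub_self]
  convert h'.comp_sub_const t t using 2 with s
  push_cast
  ring_nf

lemma SHolWhite.hasVDerivAt_norm_sq_Fdn {δ : ℝ} {F : ℂ → ℂ} {w : ℂ} (h : SHolWhite δ F w) :
    HasVDerivAt (fun z => ((‖Fdn F z‖ ^ 2 : ℝ) : ℂ))
      (2 / (δ : ℂ) * Fup F (w + (δ / 2 : ℝ)) * Fdn F (w + (δ / 2 : ℝ))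
        - 2 / (δ : ℂ) * Fup F w * Fdn F w) w := by
  obtain ⟨hup, hdn, -, hderiv⟩ := h
  set d := I / δ * (Fup F (w + (δ / 2 : ℝ)) - Fup F (w - (δ / 2 : ℝ)))
  have hconj_d : conj d = -I * d := by
    simp only [d, Fup, map_mul, map_sub, map_div₀, conj_I, conj_ofReal, conj_projUp]
    ring
  have hconj_g : conj (Fdn F w) = -I * Fdn F w := conj_projDn (F w)
  have hvalue : ((2 * inner ℝ (Fdn F w) d : ℝ) : ℂ)
      = 2 / (δ : ℂ) * Fup F (w + (δ / 2 : ℝ)) * Fdn F (w + (δ / 2 : ℝ))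
        - 2 / (δ : ℂ) * Fup F w * Fdn F w := by
    rw [Complex.inner, mul_comm d, ofReal_mul, ofReal_ofNat,
      ofReal_re_conj_mul_of_conj_eq_neg_I_mul hconj_g hconj_d, ← hdn, hup]
    simp only [d]
    linear_combination (-2 * Fdn F w / δ *
      (Fup F (w + (δ / 2 : ℝ)) - Fup F (w - (δ / 2 : ℝ)))) * I_sq
  rw [← hvalue]
  have h := hderiv.norm_sq.ofReal_comp
  rwa [ofReal_zero, zero_mul, add_zero] at h

lemma SHolWhite.hasDerivAt_norm_sq_Fdn_vertical {δ : ℝ} {F : ℂ → ℂ} {b : ℂ} {t : ℝ}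
    (h : SHolWhite δ F (b + t * I)) :
    HasDerivAt (fun s : ℝ => ((‖Fdn F (b + s * I)‖ ^ 2 : ℝ) : ℂ))
      (2 / (δ : ℂ) * Fup F (b + (δ / 2 : ℝ) + t * I) * Fdn F (b + (δ / 2 : ℝ) + t * I)
        - 2 / (δ : ℂ) * Fup F (b + t * I) * Fdn F (b + t * I)) t := by
  rw [add_right_comm]
  exact h.hasVDerivAt_norm_sq_Fdn.hasDerivAt_vertical

lemma ContinuousOn.Fup_mul_Fdn {F : ℂ → ℂ} {z : ℝ → ℂ} {s : Set ℝ}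
    (h : ContinuousOn (fun t => F (z t)) s) :
    ContinuousOn (fun t => Fup F (z t) * Fdn F (z t)) s :=
  (continuous_projUp.comp_continuousOn h).mul (continuous_projDn.comp_continuousOn h)

lemma continuousOn_Fup_mul_Fdn_of_sHolWhite {δ : ℝ} {F : ℂ → ℂ} {b : ℂ} {s : Set ℝ}
    (h : ∀ t ∈ s, SHolWhite δ F (b + t * I)) :
    ContinuousOn (fun t : ℝ => Fup F (b + t * I) * Fdn F (b + t * I)) s := by
  intro t ht
  obtain ⟨-, -, hup, hdn⟩ := h t ht
  exact (hup.hasDerivAt_vertical.continuousAt.mul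
    hdn.hasDerivAt_vertical.continuousAt).continuousWithinAt

open intervalIntegral in
theorem contour_identity_general
    (δ : ℝ) (b : ℂ) (t₁ t₂ : ℝ) (ht : t₁ < t₂) (F : ℂ → ℂ)
    (hsh : ∀ t ∈ Set.Icc t₁ t₂, SHolWhite δ F (b + (t : ℂ) * Complex.I))
    (hcontc : ContinuousOn
      (fun t : ℝ => F (b + (δ / 2 : ℝ) + (t : ℂ) * Complex.I)) (Set.Icc t₁ t₂)) :
    (∫ t in t₁..t₂,
        (2 / (δ : ℂ) * Fup F (b + (δ / 2 : ℝ) + (t : ℂ) * Complex.I)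
            * Fdn F (b + (δ / 2 : ℝ) + (t : ℂ) * Complex.I)
          - 2 / (δ : ℂ) * Fup F (b + (t : ℂ) * Complex.I)
            * Fdn F (b + (t : ℂ) * Complex.I)))
      = ((‖Fdn F (b + (t₂ : ℂ) * Complex.I)‖ ^ 2
          - ‖Fdn F (b + (t₁ : ℂ) * Complex.I)‖ ^ 2 : ℝ) : ℂ) := by
  rw [← Set.uIcc_of_le ht.le] at hsh hcontc
  have hcont : ContinuousOn (fun t : ℝ =>
      2 / (δ : ℂ) * Fup F (b + (δ / 2 : ℝ) + t * I) * Fdn F (b + (δ / 2 : ℝ) + t * I)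
        - 2 / (δ : ℂ) * Fup F (b + t * I) * Fdn F (b + t * I)) (Set.uIcc t₁ t₂) := by
    simp only [mul_assoc]
    exact (continuousOn_const.mul hcontc.Fup_mul_Fdn).sub
      (continuousOn_const.mul (continuousOn_Fup_mul_Fdn_of_sHolWhite hsh))
  rw [integral_eq_sub_of_hasDerivAt (fun t ht => (hsh t ht).hasDerivAt_norm_sq_Fdn_vertical)
    hcont.intervalIntegrable, ofReal_sub]

open intervalIntegral in
/-- Contour identity for s-holomorphic functions (well-definedness step in the proof of
Proposition 3.3). -/
theorem contour_identity
    (δ : ℝ) (hδ : 0 < δ) (b : ℂ) (t₁ t₂ : ℝ) (ht : t₁ < t₂) (F : ℂ → ℂ)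
    (hsh : ∀ t ∈ Set.Icc t₁ t₂, SHolWhite δ F (b + (t : ℂ) * Complex.I))
    (hcontb : ContinuousOn (fun t : ℝ => F (b + (t : ℂ) * Complex.I)) (Set.Icc t₁ t₂))
    (hcontc : ContinuousOn
      (fun t : ℝ => F (b + (δ / 2 : ℝ) + (t : ℂ) * Complex.I)) (Set.Icc t₁ t₂)) :
    (∫ t in t₁..t₂,
        (2 / (δ : ℂ) * Fup F (b + (δ / 2 : ℝ) + (t : ℂ) * Complex.I)
            * Fdn F (b + (δ / 2 : ℝ) + (t : ℂ) * Complex.I)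
          - 2 / (δ : ℂ) * Fup F (b + (t : ℂ) * Complex.I)
            * Fdn F (b + (t : ℂ) * Complex.I)))
      = ((‖Fdn F (b + (t₂ : ℂ) * Complex.I)‖ ^ 2
          - ‖Fdn F (b + (t₁ : ℂ) * Complex.I)‖ ^ 2 : ℝ) : ℂ) :=
  contour_identity_general δ b t₁ t₂ ht F hsh hcontc
end
end
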